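/- arXiv:1710.10457 — 2 statements merged into one kernel-verified Lean document; each statement's English description precedes it below -/
import Mathlib

section
/- In the hierarchical setup, assume that d(x, g_l(x)) ≤ 2^l for all x ∈ X, that d(g_i(x), g_{i+1}(x)) ≤ 2^{i+1} for all x ∈ X and all l ≤ i < r, and that g_r is a constant map. Then d(x,y) ≤ d_T(x,y) for all x, y ∈ X, and consequently W_d(p,q) ≤ W_{d_T}(p,q) for all probability distributions p and q on X. -/
/-- `p` is a probability distribution on the finite set `X`. -/
def IsProb {X : Type*} [Fintype X] (p : X → ℝ) : Prop :=
  (∀ x, 0 ≤ p x) ∧ ∑ x, p x = 1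

/-- `M` is a coupling of `p` and `q`: a probability distribution on `X × X`
whose first marginal is `p` and second marginal is `q`. -/
def IsCoupling {X : Type*} [Fintype X] (p q : X → ℝ) (M : X × X → ℝ) : Prop :=
  (∀ z, 0 ≤ M z) ∧ (∀ x, ∑ y, M (x, y) = p x) ∧ (∀ y, ∑ x, M (x, y) = q y)

/-- The Wasserstein (transportation) distance between `p` and `q` with respect to the
cost function `c`: the infimum, over all couplings `M` of `p` and `q`, of the expected cost. -/
noncomputable def wassersteinDist {X : Type*} [Fintype X] (c : X → X → ℝ) (p q : X → ℝ) : ℝ :=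
  sInf {w : ℝ | ∃ M : X × X → ℝ, IsCoupling p q M ∧ w = ∑ z : X × X, M z * c z.1 z.2}

/-- The `L₁` distance between two distributions on a finite set. -/
noncomputable def l1Dist {X : Type*} [Fintype X] (p q : X → ℝ) : ℝ :=
  ∑ x, |p x - q x|

/-- The pushforward of the distribution `p` along the map `g`. -/
noncomputable def pushforward {X : Type*} [Fintype X] [DecidableEq X]
    (g : X → X) (p : X → ℝ) : X → ℝ :=
  fun z => ∑ x ∈ Finset.univ.filter (fun x => g x = z), p x

/-- The tree metric associated with the hierarchical family of maps `g i`, levels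
`l ≤ i ≤ r`: `d_T x x = 0` and, for `x ≠ y`,
`d_T x y = 2^(l+1) + ∑_{i=l}^{r-1} 2^(i+2) · 1[g i x ≠ g i y]`. -/
noncomputable def treeDist {X : Type*} [DecidableEq X] (l r : ℤ) (g : ℤ → X → X)
    (x y : X) : ℝ :=
  if x = y then 0
  else (2 : ℝ) ^ (l + 1) +
    ∑ i ∈ Finset.Icc l (r - 1), if g i x ≠ g i y then (2 : ℝ) ^ (i + 2) else 0

/-- Hierarchical setup: if `d(x, g_l(x)) ≤ 2^l`, `d(g_i(x), g_{i+1}(x)) ≤ 2^(i+1)` for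
`l ≤ i < r`, and `g_r` is constant, then `d ≤ d_T` pointwise and hence
`W_d(p,q) ≤ W_{d_T}(p,q)` for all probability distributions `p`, `q`. -/
theorem dist_le_treeDist_and_wasserstein_le
    {X : Type*} [MetricSpace X] [Fintype X] [Nonempty X] [DecidableEq X]
    (l r : ℤ) (hlr : l ≤ r) (π g : ℤ → X → X)
    (hgl : g l = π l)
    (hgs : ∀ i : ℤ, l ≤ i → i < r → g (i + 1) = π (i + 1) ∘ g i)
    (hdl : ∀ x : X, dist x (g l x) ≤ (2 : ℝ) ^ l)
    (hds : ∀ i : ℤ, l ≤ i → i < r → ∀ x : X, dist (g i x) (g (i + 1) x) ≤ (2 : ℝ) ^ (i + 1))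
    (hconst : ∃ z : X, ∀ x : X, g r x = z) :
    (∀ x y : X, dist x y ≤ treeDist l r g x y) ∧
      ∀ p q : X → ℝ, IsProb p → IsProb q →
        wassersteinDist (fun x y => dist x y) p q ≤ wassersteinDist (treeDist l r g) p q := by
  obtain ⟨z, hz⟩ := hconst
  have keyn : ∀ n : ℕ, l + n ≤ r → ∀ x : X,
      dist x (g (l + n) x) ≤ (2:ℝ) ^ l + ∑ j ∈ Finset.Icc l (l + n - 1), (2:ℝ) ^ (j + 1) := by
    intro n
    induction n with
    | zero =>
      intro _ x
      rw [Finset.Icc_eq_empty (by omega), Finset.sum_empty, add_zero]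
      simpa using hdl x
    | succ m ih =>
      intro h x
      have hcast : l + ((m + 1 : ℕ) : ℤ) = (l + m) + 1 := by push_cast; ring
      rw [hcast]
      have hmr : l + (m : ℤ) < r := by omega
      have h1 := ih (by omega) x
      have h2 := hds (l + m) (by omega) hmr x
      have hii : Finset.Icc l ((l + m) + 1 - 1) = insert (l + (m:ℤ)) (Finset.Icc l (l + m - 1)) := by
        ext j
        simp only [Finset.mem_Icc, Finset.mem_insert]
        omega
      have hnm : (l + (m:ℤ)) ∉ Finset.Icc l (l + m - 1) := by
        simp only [Finset.mem_Icc]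
        omega
      rw [hii, Finset.sum_insert hnm]
      calc dist x (g ((l + m) + 1) x)
          ≤ dist x (g (l + m) x) + dist (g (l + m) x) (g ((l + m) + 1) x) := dist_triangle _ _ _
        _ ≤ ((2:ℝ) ^ l + ∑ j ∈ Finset.Icc l (l + m - 1), (2:ℝ) ^ (j + 1)) + (2:ℝ) ^ ((l + m) + 1) :=
            add_le_add h1 h2
        _ = (2:ℝ) ^ l + ((2:ℝ) ^ (l + (m:ℤ) + 1) + ∑ j ∈ Finset.Icc l (l + m - 1), (2:ℝ) ^ (j + 1)) := by
            ring
  have key : ∀ i : ℤ, l ≤ i → i ≤ r → ∀ x : X,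
      dist x (g i x) ≤ (2:ℝ) ^ l + ∑ j ∈ Finset.Icc l (i - 1), (2:ℝ) ^ (j + 1) := by
    intro i hi hir x
    obtain ⟨n, rfl⟩ : ∃ n : ℕ, i = l + n := ⟨(i - l).toNat, by omega⟩
    exact keyn n hir x
  have hpt : ∀ x y : X, dist x y ≤ treeDist l r g x y := by
    intro x y
    by_cases hxy : x = y
    · simp [treeDist, hxy]
    · rw [treeDist, if_neg hxy]
      set S := (Finset.Icc l r).filter (fun i => g i x = g i y) with hS
      have hSne : S.Nonempty := by
        refine ⟨r, ?_⟩
        rw [hS, Finset.mem_filter, Finset.mem_Icc]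
        exact ⟨⟨hlr, le_refl r⟩, by rw [hz x, hz y]⟩
      obtain ⟨i0, hi0S, hi0min⟩ := S.exists_min_image id hSne
      rw [hS, Finset.mem_filter, Finset.mem_Icc] at hi0S
      obtain ⟨⟨hli0, hi0r⟩, heq⟩ := hi0S
      have h1 := key i0 hli0 hi0r x
      have h2 := key i0 hli0 hi0r y
      have hd : dist x y ≤ dist x (g i0 x) + dist y (g i0 y) := by
        calc dist x y ≤ dist x (g i0 x) + dist (g i0 x) y := dist_triangle _ _ _
          _ = dist x (g i0 x) + dist y (g i0 y) := by rw [heq, dist_comm (g i0 y) y]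
      have hmin : ∀ j, l ≤ j → j ≤ i0 - 1 → g j x ≠ g j y := by
        intro j hj1 hj2 hjeq
        have hjS : j ∈ S := by
          rw [hS, Finset.mem_filter, Finset.mem_Icc]
          exact ⟨⟨hj1, by omega⟩, hjeq⟩
        have := hi0min j hjS
        simp only [id] at this
        omega
      have hsum : ∑ j ∈ Finset.Icc l (i0 - 1), (2:ℝ) ^ (j + 2) ≤
          ∑ i ∈ Finset.Icc l (r - 1), (if g i x ≠ g i y then (2:ℝ) ^ (i + 2) else 0) := by
        have hcg : ∑ j ∈ Finset.Icc l (i0 - 1), (2:ℝ) ^ (j + 2)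
            = ∑ j ∈ Finset.Icc l (i0 - 1), (if g j x ≠ g j y then (2:ℝ) ^ (j + 2) else 0) := by
          refine Finset.sum_congr rfl fun j hj => ?_
          rw [Finset.mem_Icc] at hj
          rw [if_pos (hmin j hj.1 hj.2)]
        rw [hcg]
        refine Finset.sum_le_sum_of_subset_of_nonneg
          (Finset.Icc_subset_Icc_right (by omega)) fun j _ _ => ?_
        split_ifs
        · positivity
        · exact le_refl 0
      have hterm : ∀ j : ℤ, (2:ℝ) ^ (j + 2) = (2:ℝ) ^ (j + 1) + (2:ℝ) ^ (j + 1) := by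
        intro j
        rw [show j + 2 = (j + 1) + 1 by ring, zpow_add_one₀ (by norm_num : (2:ℝ) ≠ 0)]
        ring
      calc dist x y ≤ dist x (g i0 x) + dist y (g i0 y) := hd
        _ ≤ ((2:ℝ) ^ l + ∑ j ∈ Finset.Icc l (i0 - 1), (2:ℝ) ^ (j + 1))
            + ((2:ℝ) ^ l + ∑ j ∈ Finset.Icc l (i0 - 1), (2:ℝ) ^ (j + 1)) := add_le_add h1 h2
        _ = (2:ℝ) ^ (l + 1) + ∑ j ∈ Finset.Icc l (i0 - 1), (2:ℝ) ^ (j + 2) := by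
            rw [zpow_add_one₀ (by norm_num : (2:ℝ) ≠ 0)]
            simp_rw [hterm]
            rw [Finset.sum_add_distrib]
            ring
        _ ≤ (2:ℝ) ^ (l + 1) +
            ∑ i ∈ Finset.Icc l (r - 1), (if g i x ≠ g i y then (2:ℝ) ^ (i + 2) else 0) := by
            linarith
  refine ⟨hpt, fun p q hp hq => ?_⟩
  have hbdd : BddBelow {w : ℝ | ∃ M : X × X → ℝ, IsCoupling p q M ∧
      w = ∑ z : X × X, M z * dist z.1 z.2} := by
    refine ⟨0, ?_⟩
    rintro w ⟨M, hM, rfl⟩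
    exact Finset.sum_nonneg fun z _ => mul_nonneg (hM.1 z) dist_nonneg
  refine le_csInf ⟨_, ⟨fun z => p z.1 * q z.2, ⟨fun z => mul_nonneg (hp.1 z.1) (hq.1 z.2),
    fun x => by show (∑ y, p x * q y) = p x; rw [← Finset.mul_sum, hq.2, mul_one],
    fun y => by show (∑ x, p x * q y) = q y; rw [← Finset.sum_mul, hp.2, one_mul]⟩, rfl⟩⟩ ?_
  rintro w ⟨M, hM, rfl⟩
  calc wassersteinDist (fun x y => dist x y) p q
      ≤ ∑ z : X × X, M z * dist z.1 z.2 := csInf_le hbdd ⟨M, hM, rfl⟩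
    _ ≤ ∑ z : X × X, M z * treeDist l r g z.1 z.2 :=
        Finset.sum_le_sum fun z _ => mul_le_mul_of_nonneg_left (hpt z.1 z.2) (hM.1 z)
end

section
/- There is a universal constant c > 0 with the following property. For every integer n ≥ 2, every ε ∈ (0, 1/2], every m ∈ ℕ and every randomized tester with known target A : P({1,…,n}) × {1,…,n}^m → [0,1]: if for every probability distribution p on {1,…,n}, E_{s∼p^{⊗m}}[A(p,s)] ≥ 2/3, and for all probability distributions p, q on {1,…,n} with ‖p−q‖₁ ≥ ε, E_{s∼q^{⊗m}}[1 − A(p,s)] ≥ 2/3, then m ≥ c·√n/ε². -/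
/-- The expected value of `A s` when the `m` samples `s` are drawn i.i.d. from the
distribution `q` on the finite set `X`; for a randomized tester `A` taking values in
`[0,1]`, this is its acceptance probability under `q`. -/
noncomputable def expectedVal {X : Type*} [Fintype X] (q : X → ℝ) {m : ℕ}
    (A : (Fin m → X) → ℝ) : ℝ :=
  ∑ s : Fin m → X, (∏ i, q (s i)) * A s

open Finset Real
open scoped BigOperators

section Sampling

variable {X : Type*} [Fintype X]

noncomputable def uniformDist (X : Type*) [Fintype X] : X → ℝ := fun _ => (Fintype.card X : ℝ)⁻¹

lemma isProb_uniformDist [Nonempty X] : IsProb (uniformDist X) :=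
  ⟨fun _ => by unfold uniformDist; positivity, by simp [uniformDist]⟩

lemma IsProb.sum_prod_apply {q : X → ℝ} (hq : IsProb q) (m : ℕ) :
    ∑ s : Fin m → X, ∏ i, q (s i) = 1 := by
  rw [← Fintype.sum_pow, hq.2, one_pow]

lemma IsProb.expectedVal_one_sub {q : X → ℝ} (hq : IsProb q) {m : ℕ} (A : (Fin m → X) → ℝ) :
    expectedVal q (fun s => 1 - A s) = 1 - expectedVal q A := by
  simp only [expectedVal, mul_sub, mul_one, sum_sub_distrib, hq.sum_prod_apply]

lemma prod_uniformDist_apply {m : ℕ} (s : Fin m → X) :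
    ∏ i, uniformDist X (s i) = (Fintype.card (Fin m → X) : ℝ)⁻¹ := by
  simp [uniformDist]

lemma sum_sq_expect_prod_apply {Z : Type*} [Fintype Z] (p : Z → X → ℝ) (m : ℕ) :
    ∑ s : Fin m → X, (𝔼 z, ∏ i, p z (s i)) ^ 2 = 𝔼 z, 𝔼 z', (∑ x, p z x * p z' x) ^ m := by
  simp_rw [sq, expect_mul_expect, ← prod_mul_distrib, Fintype.sum_pow, ← expect_sum_comm]

end Sampling

lemma sub_le_sum_abs_sub_expect {ι Z : Type*} [Fintype ι] [Fintype Z] [Nonempty Z]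
    {P₀ : ι → ℝ} {P : Z → ι → ℝ} {A : ι → ℝ} (hA : ∀ s, 0 ≤ A s ∧ A s ≤ 1) {a b : ℝ}
    (hacc : a ≤ ∑ s, P₀ s * A s) (hrej : ∀ z, ∑ s, P z s * A s ≤ b) :
    a - b ≤ ∑ s, |P₀ s - 𝔼 z, P z s| := by
  have hmix : ∑ s, (𝔼 z, P z s) * A s ≤ b := by
    simp_rw [expect_mul]
    rw [← expect_sum_comm]
    exact expect_le univ_nonempty fun z _ => hrej z
  calc a - b ≤ ∑ s, (P₀ s - 𝔼 z, P z s) * A s := by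
        simp only [sub_mul, sum_sub_distrib]; linarith
    _ ≤ ∑ s, |P₀ s - 𝔼 z, P z s| := sum_le_sum fun s _ =>
        (mul_le_mul_of_nonneg_right (le_abs_self _) (hA s).1).trans
          (mul_le_of_le_one_right (abs_nonneg _) (hA s).2)

lemma sq_sum_abs_inv_card_sub_le {ι : Type*} [Fintype ι] {Q : ι → ℝ} (hQ : ∑ s, Q s = 1) :
    (∑ s, |(Fintype.card ι : ℝ)⁻¹ - Q s|) ^ 2 ≤ Fintype.card ι * ∑ s, Q s ^ 2 - 1 := by
  have hN : (Fintype.card ι : ℝ) ≠ 0 := by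
    rintro h
    simp_all [Fintype.card_eq_zero_iff]
  calc (∑ s, |(Fintype.card ι : ℝ)⁻¹ - Q s|) ^ 2
      ≤ Fintype.card ι * ∑ s, |(Fintype.card ι : ℝ)⁻¹ - Q s| ^ 2 := sq_sum_le_card_mul_sum_sq
    _ = Fintype.card ι * ∑ s, Q s ^ 2 - 1 := by
        simp only [sq_abs, sub_sq, sum_add_distrib, sum_sub_distrib, ← mul_sum, hQ]
        simp only [inv_pow, sum_const, card_univ, nsmul_eq_mul, mul_one]
        field_simp
        ring

theorem one_add_sq_sub_le_expect_collision {X Z : Type*} [Fintype X] [Fintype Z] [Nonempty Z]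
    {m : ℕ} {p : Z → X → ℝ} (hp : ∀ z, IsProb (p z)) {A : (Fin m → X) → ℝ}
    (hA : ∀ s, 0 ≤ A s ∧ A s ≤ 1) {a b : ℝ} (hab : b ≤ a)
    (hacc : a ≤ expectedVal (uniformDist X) A) (hrej : ∀ z, expectedVal (p z) A ≤ b) :
    1 + (a - b) ^ 2 ≤ 𝔼 z, 𝔼 z', (Fintype.card X * ∑ x, p z x * p z' x) ^ m := by
  set Q : (Fin m → X) → ℝ := fun s => 𝔼 z, ∏ i, p z (s i)
  have hQ : ∑ s, Q s = 1 := by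
    simp only [Q, ← expect_sum_comm, (hp _).sum_prod_apply, Fintype.expect_const]
  have hdist : a - b ≤ ∑ s, |(Fintype.card (Fin m → X) : ℝ)⁻¹ - Q s| := by
    simpa only [prod_uniformDist_apply] using sub_le_sum_abs_sub_expect hA hacc hrej
  have hcard : (Fintype.card (Fin m → X) : ℝ) = Fintype.card X ^ m := by simp
  calc 1 + (a - b) ^ 2
      ≤ 1 + (∑ s, |(Fintype.card (Fin m → X) : ℝ)⁻¹ - Q s|) ^ 2 := by
        gcongr
    _ ≤ Fintype.card (Fin m → X) * ∑ s, Q s ^ 2 := by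
        linarith [sq_sum_abs_inv_card_sub_le hQ]
    _ = 𝔼 z, 𝔼 z', (Fintype.card X * ∑ x, p z x * p z' x) ^ m := by
        simp only [Q, sum_sq_expect_prod_apply, hcard, mul_expect, mul_pow]

section Hypercube

def spin (b : Bool) : ℝ := if b then 1 else -1

lemma abs_spin (b : Bool) : |spin b| = 1 := by cases b <;> simp [spin]

lemma sum_exp_mul_spin_mul_spin (a : ℝ) (c : Bool) :
    ∑ b, exp (a * (spin c * spin b)) = 2 * cosh a := by
  cases c <;> simp [spin, cosh_eq] <;> ring

lemma expect_exp_mul_sum_spin_mul_spin {k : ℕ} (a : ℝ) (z : Fin k → Bool) :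
    𝔼 z' : Fin k → Bool, exp (a * ∑ i, spin (z i) * spin (z' i)) = cosh a ^ k := by
  simp_rw [Fintype.expect_eq_sum_div_card, mul_sum, exp_sum]
  rw [← Fintype.prod_sum fun i b => exp (a * (spin (z i) * spin b))]
  simp only [sum_exp_mul_spin_mul_spin, prod_const, card_univ, Fintype.card_fin,
    Fintype.card_fun, Fintype.card_bool, Nat.cast_pow, Nat.cast_ofNat, mul_pow]
  field_simp

lemma one_add_pow_le_exp_mul {y : ℝ} (hy : -1 ≤ y) (m : ℕ) : (1 + y) ^ m ≤ exp (m * y) := by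
  rw [exp_nat_mul]
  exact pow_le_pow_left₀ (by linarith) (by linarith [add_one_le_exp y]) m

lemma expect_expect_one_add_mul_sum_spin_pow_le {k m : ℕ} {t : ℝ} (ht : 0 ≤ t)
    (htk : t * k ≤ 1) :
    𝔼 z : Fin k → Bool, 𝔼 z' : Fin k → Bool, (1 + t * ∑ i, spin (z i) * spin (z' i)) ^ m
      ≤ exp (k * (m * t) ^ 2 / 2) := by
  have hcorr : ∀ z z' : Fin k → Bool, -1 ≤ t * ∑ i, spin (z i) * spin (z' i) := by
    intro z z'
    have : |∑ i, spin (z i) * spin (z' i)| ≤ k :=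
      (abs_sum_le_sum_abs _ _).trans (by simp [abs_mul, abs_spin])
    nlinarith [neg_abs_le (∑ i, spin (z i) * spin (z' i))]
  calc 𝔼 z : Fin k → Bool, 𝔼 z' : Fin k → Bool, (1 + t * ∑ i, spin (z i) * spin (z' i)) ^ m
      ≤ 𝔼 z : Fin k → Bool, 𝔼 z' : Fin k → Bool, exp (m * t * ∑ i, spin (z i) * spin (z' i)) :=
        expect_le_expect fun z _ => expect_le_expect fun z' _ => by
          rw [mul_assoc]; exact one_add_pow_le_exp_mul (hcorr z z') m
    _ = cosh (m * t) ^ k := by simp only [expect_exp_mul_sum_spin_mul_spin, Fintype.expect_const]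
    _ ≤ exp ((m * t) ^ 2 / 2) ^ k := by gcongr; exact cosh_le_exp_half_sq _
    _ = exp (k * (m * t) ^ 2 / 2) := by rw [← exp_nat_mul, mul_div_assoc]

end Hypercube

section Paninski

variable {k n : ℕ}

def pairSign (z : Fin k → Bool) (j : ℕ) : ℝ :=
  if h : j / 2 < k then (-1) ^ j * spin (z ⟨j / 2, h⟩) else 0

lemma pairSign_two_mul (z : Fin k → Bool) (i : Fin k) : pairSign z (2 * i) = spin (z i) := by
  have h : 2 * (i : ℕ) / 2 = i := by omega
  simp [pairSign, h]

lemma pairSign_two_mul_add_one (z : Fin k → Bool) (i : Fin k) :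
    pairSign z (2 * i + 1) = -spin (z i) := by
  have h : (2 * (i : ℕ) + 1) / 2 = i := by omega
  simp [pairSign, h, pow_succ]

lemma pairSign_of_le (z : Fin k → Bool) {j : ℕ} (hj : 2 * k ≤ j) : pairSign z j = 0 :=
  dif_neg (by omega)

lemma abs_pairSign_le (z : Fin k → Bool) (j : ℕ) : |pairSign z j| ≤ 1 := by
  unfold pairSign
  split_ifs <;> simp [abs_spin]

lemma sum_range_two_mul (g : ℕ → ℝ) (k : ℕ) :
    ∑ j ∈ range (2 * k), g j = ∑ i ∈ range k, (g (2 * i) + g (2 * i + 1)) := by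
  induction k with
  | zero => simp
  | succ k ih => rw [mul_add_one, sum_range_succ, sum_range_succ, sum_range_succ, ih, add_assoc]

lemma sum_fin_eq_sum_pairs (hk : 2 * k ≤ n) (g : ℕ → ℝ) (hg : ∀ j, 2 * k ≤ j → g j = 0) :
    ∑ x : Fin n, g x = ∑ i : Fin k, (g (2 * i) + g (2 * i + 1)) := by
  rw [Fin.sum_univ_eq_sum_range g, Fin.sum_univ_eq_sum_range (fun i => g (2 * i) + g (2 * i + 1)),
    ← sum_range_two_mul, sum_subset (range_subset_range.mpr hk)]
  intro j _ hj
  exact hg j (by simpa using hj)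

lemma sum_pairSign (hk : 2 * k ≤ n) (z : Fin k → Bool) : ∑ x : Fin n, pairSign z x = 0 := by
  rw [sum_fin_eq_sum_pairs hk _ fun j => pairSign_of_le z]
  simp [pairSign_two_mul, pairSign_two_mul_add_one]

lemma sum_abs_pairSign (hk : 2 * k ≤ n) (z : Fin k → Bool) :
    ∑ x : Fin n, |pairSign z x| = 2 * k := by
  rw [sum_fin_eq_sum_pairs hk (fun j => |pairSign z j|) fun j hj => by simp [pairSign_of_le z hj]]
  simp only [pairSign_two_mul, pairSign_two_mul_add_one, abs_neg, abs_spin, sum_const, card_univ,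
    Fintype.card_fin, nsmul_eq_mul]
  ring

lemma sum_pairSign_mul_pairSign (hk : 2 * k ≤ n) (z z' : Fin k → Bool) :
    ∑ x : Fin n, pairSign z x * pairSign z' x = 2 * ∑ i, spin (z i) * spin (z' i) := by
  rw [sum_fin_eq_sum_pairs hk (fun j => pairSign z j * pairSign z' j)
    fun j hj => by simp [pairSign_of_le z hj], mul_sum]
  simp only [pairSign_two_mul, pairSign_two_mul_add_one, neg_mul_neg, ← two_mul]

noncomputable def paninskiDist (n : ℕ) (δ : ℝ) (z : Fin k → Bool) : Fin n → ℝ :=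
  fun x => (1 + δ * pairSign z x) / n

variable {δ : ℝ}

lemma isProb_paninskiDist (hn : 0 < n) (hk : 2 * k ≤ n) (hδ : |δ| ≤ 1) (z : Fin k → Bool) :
    IsProb (paninskiDist n δ z) := by
  refine ⟨fun x => div_nonneg ?_ n.cast_nonneg, ?_⟩
  · have : |δ * pairSign z x| ≤ 1 := by
      rw [abs_mul]
      exact mul_le_one₀ hδ (abs_nonneg _) (abs_pairSign_le z x)
    linarith [neg_abs_le (δ * pairSign z x)]
  · simp [paninskiDist, ← sum_div, sum_add_distrib, ← mul_sum, sum_pairSign hk, hn.ne']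

lemma l1Dist_uniformDist_paninskiDist (hk : 2 * k ≤ n) (z : Fin k → Bool) :
    l1Dist (uniformDist (Fin n)) (paninskiDist n δ z) = 2 * k * |δ| / n := by
  have h (x : Fin n) :
      |uniformDist (Fin n) x - paninskiDist n δ z x| = |δ| * |pairSign z x| / n := by
    rw [uniformDist, paninskiDist, Fintype.card_fin, inv_eq_one_div, div_sub_div_same, abs_div,
      Nat.abs_cast, sub_add_cancel_left, abs_neg, abs_mul]
  simp only [l1Dist, h, ← sum_div, ← mul_sum, sum_abs_pairSign hk]
  ring

lemma card_mul_sum_paninskiDist_mul (hn : 0 < n) (hk : 2 * k ≤ n) (z z' : Fin k → Bool) :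
    Fintype.card (Fin n) * ∑ x, paninskiDist n δ z x * paninskiDist n δ z' x
      = 1 + 2 * δ ^ 2 / n * ∑ i, spin (z i) * spin (z' i) := by
  have h (x : Fin n) : paninskiDist n δ z x * paninskiDist n δ z' x
      = (1 + δ * pairSign z x + δ * pairSign z' x + δ ^ 2 * (pairSign z x * pairSign z' x))
        / n ^ 2 := by
    simp only [paninskiDist]
    ring
  simp only [h, ← sum_div, sum_add_distrib, ← mul_sum, sum_pairSign hk,
    sum_pairSign_mul_pairSign hk, sum_const, card_univ, Fintype.card_fin, nsmul_eq_mul, mul_one,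
    mul_zero, add_zero]
  have : (n : ℝ) ≠ 0 := by positivity
  field_simp

lemma expect_expect_collision_paninskiDist_le (hn : 0 < n) (hk : 2 * k ≤ n)
    (hδ : 2 * δ ^ 2 * k ≤ n) (m : ℕ) :
    𝔼 z : Fin k → Bool, 𝔼 z' : Fin k → Bool,
        (Fintype.card (Fin n) * ∑ x, paninskiDist n δ z x * paninskiDist n δ z' x) ^ m
      ≤ exp (k * (m * (2 * δ ^ 2 / n)) ^ 2 / 2) := by
  simp only [card_mul_sum_paninskiDist_mul hn hk]
  refine expect_expect_one_add_mul_sum_spin_pow_le (by positivity) ?_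
  rwa [div_mul_eq_mul_div, div_le_one (by positivity)]

end Paninski

lemma one_sub_inv_le_of_le_exp {x y : ℝ} (hy : 0 < y) (h : y ≤ exp x) : 1 - y⁻¹ ≤ x :=
  (one_sub_inv_le_log_of_pos hy).trans ((log_le_iff_le_exp hy).mpr h)

/-- L₁ identity testing lower bound on `[n]`: there is a universal constant `c > 0` such
that for every `n ≥ 2`, `ε ∈ (0,1/2]` and randomized identity tester with known target
`A : P([n]) × [n]^m → [0,1]` that accepts every true target with probability `≥ 2/3` and
rejects with probability `≥ 2/3` whenever `‖p−q‖₁ ≥ ε`, one has `m ≥ c·√n/ε²`. -/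
theorem l1_identity_testing_lower_bound :
    ∃ c : ℝ, 0 < c ∧ ∀ n : ℕ, 2 ≤ n → ∀ ε : ℝ, 0 < ε → ε ≤ 1 / 2 →
      ∀ (m : ℕ) (A : (Fin n → ℝ) → (Fin m → Fin n) → ℝ),
        (∀ (p : Fin n → ℝ) (s : Fin m → Fin n), IsProb p → 0 ≤ A p s ∧ A p s ≤ 1) →
        (∀ p : Fin n → ℝ, IsProb p → 2 / 3 ≤ expectedVal p (A p)) →
        (∀ p q : Fin n → ℝ, IsProb p → IsProb q → ε ≤ l1Dist p q →
          2 / 3 ≤ expectedVal q (fun s => 1 - A p s)) →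
        c * Real.sqrt n / ε ^ 2 ≤ (m : ℝ) := by
  refine ⟨1 / 16, by norm_num, fun n hn ε hε hε₂ m A hA hacc hrej => ?_⟩
  obtain ⟨hk, hkn, hn₀⟩ : 2 * (n / 2) ≤ n ∧ n ≤ 4 * (n / 2) ∧ 0 < n := by omega
  set k := n / 2
  have : NeZero n := ⟨hn₀.ne'⟩
  set u := uniformDist (Fin n)
  have hu : IsProb u := isProb_uniformDist
  set p : (Fin k → Bool) → Fin n → ℝ := paninskiDist n (2 * ε)
  have hp z : IsProb (p z) :=
    isProb_paninskiDist hn₀ hk (by rw [abs_of_pos (by positivity)]; linarith) z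
  have hfar z : ε ≤ l1Dist u (p z) := by
    rw [l1Dist_uniformDist_paninskiDist hk, abs_of_pos (by positivity), le_div_iff₀ (by positivity)]
    have : (n : ℝ) ≤ 4 * k := by exact_mod_cast hkn
    nlinarith
  have hrej' z : expectedVal (p z) (A u) ≤ 1 / 3 := by
    linarith [(hp z).expectedVal_one_sub (A u) ▸ hrej u (p z) hu (hp z) (hfar z)]
  have hk' : (2 * k : ℝ) ≤ n := by exact_mod_cast hk
  have hδ : 2 * (2 * ε) ^ 2 * k ≤ n := by
    nlinarith [mul_le_mul_of_nonneg_right (by nlinarith : (2 * ε) ^ 2 ≤ 1) k.cast_nonneg]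
  have hcoll := (one_add_sq_sub_le_expect_collision hp (hA u · hu) (by norm_num)
    (hacc u hu) hrej').trans (expect_expect_collision_paninskiDist_le hn₀ hk hδ m)
  have hinfo := one_sub_inv_le_of_le_exp (by norm_num) hcoll
  have hsq : (n : ℝ) ≤ (16 * (m * ε ^ 2)) ^ 2 := by
    have h1 : k * (m * (2 * (2 * ε) ^ 2 / n)) ^ 2 / 2 = 32 * k * (m * ε ^ 2) ^ 2 / n ^ 2 := by
      field_simp; ring
    rw [h1, le_div_iff₀ (by positivity)] at hinfo
    nlinarith [sq_nonneg (m * ε ^ 2)]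
  rw [div_le_iff₀ (by positivity)]
  linarith [(sqrt_le_left (by positivity)).mpr hsq]
end
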